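/- arXiv:2505.09799 — 6 statements merged into one kernel-verified Lean document; each statement's English description precedes it below -/
import Mathlib

section
/- The signed network coordination game on a network (V, W) with external field h is an exact potential game if and only if the weight matrix W is symmetric (i.e., W_ij = W_ji for all i, j ∈ V). -/
open Finset Function

noncomputable section

/-- The binary action set `A = {−1, +1}`, as a subtype of `ℝ`. -/
abbrev Act : Type := {r : ℝ // r = 1 ∨ r = -1}

def onePt : Act := ⟨1, Or.inl rfl⟩

def negOnePt : Act := ⟨-1, Or.inr rfl⟩

def actMul (a b : Act) : Act :=
  ⟨(a : ℝ) * (b : ℝ), by rcases a.2 with h1 | h1 <;> rcases b.2 with h2 | h2 <;> norm_num [h1, h2]⟩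

def actNeg (a : Act) : Act :=
  ⟨-(a : ℝ), by rcases a.2 with h1 | h1 <;> norm_num [h1]⟩

/-- Utility of player `i` in the SNC game on the network `(V, W)` with external field `h`. -/
def utility {V : Type*} [Fintype V] (W : V → V → ℝ) (h : V → ℝ) (i : V) (x : V → Act) : ℝ :=
  h i * (x i : ℝ) + (x i : ℝ) * ∑ j, W i j * (x j : ℝ)

/-- Best response set of player `i` (depends only on `x_{−i}`). -/
def bestResponse {V : Type*} [Fintype V] [DecidableEq V] (W : V → V → ℝ) (h : V → ℝ)
    (i : V) (x : V → Act) : Set Act :=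
  {a | ∀ b : Act, utility W h i (Function.update x i b) ≤ utility W h i (Function.update x i a)}

/-- Nash equilibrium of the SNC game. -/
def IsNash {V : Type*} [Fintype V] [DecidableEq V] (W : V → V → ℝ) (h : V → ℝ)
    (x : V → Act) : Prop :=
  ∀ i, x i ∈ bestResponse W h i x

/-- One step of a best-response path. -/
def BRStep {V : Type*} [Fintype V] [DecidableEq V] (W : V → V → ℝ) (h : V → ℝ)
    (x y : V → Act) : Prop :=
  ∃ i, (∀ j, j ≠ i → y j = x j) ∧ y i ≠ x i ∧ y i ∈ bestResponse W h i x

def GloballyBRReachable {V : Type*} [Fintype V] [DecidableEq V] (W : V → V → ℝ) (h : V → ℝ)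
    (X : Set (V → Act)) : Prop :=
  ∀ x : V → Act, ∃ y ∈ X, Relation.ReflTransGen (BRStep W h) x y

def BRInvariant {V : Type*} [Fintype V] [DecidableEq V] (W : V → V → ℝ) (h : V → ℝ)
    (X : Set (V → Act)) : Prop :=
  ∀ x ∈ X, ∀ y, Relation.ReflTransGen (BRStep W h) x y → y ∈ X

def GloballyBRStable {V : Type*} [Fintype V] [DecidableEq V] (W : V → V → ℝ) (h : V → ℝ)
    (X : Set (V → Act)) : Prop :=
  GloballyBRReachable W h X ∧ BRInvariant W h X

/-- Structural balance of a signed weight matrix. -/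
def StructurallyBalanced {V : Type*} (W : V → V → ℝ) : Prop :=
  ∃ P : Set V, (∀ i j, (i ∈ P ↔ j ∈ P) → 0 ≤ W i j) ∧ (∀ i j, ¬(i ∈ P ↔ j ∈ P) → W i j ≤ 0)

/-- `(h^−, h^+)`-indecomposability of a network. -/
def Indecomposable {V : Type*} [Fintype V] [DecidableEq V] (W : V → V → ℝ)
    (hm hp : V → ℝ) : Prop :=
  ∀ P M : Finset V, P ∪ M = Finset.univ → Disjoint P M → P.Nonempty → M.Nonempty →
    (∃ i ∈ P, ∑ j ∈ P, |W i j| + hp i < ∑ j ∈ M, |W i j|) ∨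
    (∃ i ∈ M, (∑ j ∈ M, |W i j|) - hm i < ∑ j ∈ P, |W i j|)

/-- `Φ` is an exact potential function for the SNC game. -/
def IsExactPotential {V : Type*} [Fintype V] (W : V → V → ℝ) (h : V → ℝ)
    (Φ : (V → Act) → ℝ) : Prop :=
  ∀ (i : V) (x y : V → Act), (∀ j, j ≠ i → x j = y j) →
    utility W h i y - utility W h i x = Φ y - Φ x

lemma sum_mul_update {V : Type*} [Fintype V] [DecidableEq V] (w : V → ℝ) (x : V → Act)
    (j : V) (a : Act) :
    ∑ l, w l * ((Function.update x j a l : Act) : ℝ)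
      = (∑ l, w l * ((x l : Act) : ℝ)) + w j * ((a : ℝ) - ((x j : Act) : ℝ)) := by
  have key : ∑ l, (w l * ((Function.update x j a l : Act) : ℝ) - w l * ((x l : Act) : ℝ))
      = w j * ((a : ℝ) - ((x j : Act) : ℝ)) := by
    rw [Finset.sum_eq_single j]
    · rw [Function.update_self]; ring
    · intro b _ hb; rw [Function.update_of_ne hb]; ring
    · intro hj; exact absurd (Finset.mem_univ j) hj
  rw [Finset.sum_sub_distrib] at key
  linarith

theorem stmt0 {V : Type*} [Fintype V] [DecidableEq V] [Nonempty V]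
    (W : V → V → ℝ) (h : V → ℝ) (hdiag : ∀ i, W i i = 0) :
    (∃ Φ : (V → Act) → ℝ, IsExactPotential W h Φ) ↔ (∀ i j, W i j = W j i) := by
  constructor
  · rintro ⟨Φ, hΦ⟩ i j
    by_cases hij : i = j
    · subst hij; rfl
    set x0 : V → Act := fun _ => onePt with hx0
    set x1 : V → Act := Function.update x0 i negOnePt with hx1
    set x2 : V → Act := Function.update x0 j negOnePt with hx2
    set x3 : V → Act := Function.update x1 j negOnePt with hx3
    have hx3' : x3 = Function.update x2 i negOnePt := by
      rw [hx3, hx1, hx2, Function.update_comm hij]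
    -- the four potential equations
    have e1 := hΦ i x0 x1 (fun k hk => (Function.update_of_ne hk _ _).symm)
    have e2 := hΦ j x1 x3 (fun k hk => (Function.update_of_ne hk _ _).symm)
    have e3 := hΦ j x0 x2 (fun k hk => (Function.update_of_ne hk _ _).symm)
    have e4 := hΦ i x2 x3 (fun k hk => by rw [hx3']; exact (Function.update_of_ne hk _ _).symm)
    -- coordinate values
    have hone : ((onePt : Act) : ℝ) = 1 := rfl
    have hneg : ((negOnePt : Act) : ℝ) = -1 := rfl
    have v0i : ((x0 i : Act) : ℝ) = 1 := rfl
    have v0j : ((x0 j : Act) : ℝ) = 1 := rfl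
    have v1i : ((x1 i : Act) : ℝ) = -1 := by rw [hx1, Function.update_self]; exact hneg
    have v1j : ((x1 j : Act) : ℝ) = 1 := by
      rw [hx1, Function.update_of_ne (Ne.symm hij)]; exact hone
    have v2i : ((x2 i : Act) : ℝ) = 1 := by rw [hx2, Function.update_of_ne hij]; exact hone
    have v2j : ((x2 j : Act) : ℝ) = -1 := by rw [hx2, Function.update_self]; exact hneg
    have v3i : ((x3 i : Act) : ℝ) = -1 := by
      rw [hx3, Function.update_of_ne hij]; exact v1i
    have v3j : ((x3 j : Act) : ℝ) = -1 := by rw [hx3, Function.update_self]; exact hneg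
    -- sums
    set Si := ∑ l, W i l with hSi
    set Sj := ∑ l, W j l with hSj
    have s0i : ∑ l, W i l * ((x0 l : Act) : ℝ) = Si := by
      simp [hx0, hone, hSi]
    have s0j : ∑ l, W j l * ((x0 l : Act) : ℝ) = Sj := by
      simp [hx0, hone, hSj]
    have s1i : ∑ l, W i l * ((x1 l : Act) : ℝ) = Si := by
      rw [hx1, sum_mul_update, s0i, hdiag, v0i, hneg]; ring
    have s1j : ∑ l, W j l * ((x1 l : Act) : ℝ) = Sj - 2 * W j i := by
      rw [hx1, sum_mul_update, s0j, v0i, hneg]; ring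
    have s2i : ∑ l, W i l * ((x2 l : Act) : ℝ) = Si - 2 * W i j := by
      rw [hx2, sum_mul_update, s0i, v0j, hneg]; ring
    have s2j : ∑ l, W j l * ((x2 l : Act) : ℝ) = Sj := by
      rw [hx2, sum_mul_update, s0j, hdiag, v0j, hneg]; ring
    have s3i : ∑ l, W i l * ((x3 l : Act) : ℝ) = Si - 2 * W i j := by
      rw [hx3, sum_mul_update, s1i, v1j, hneg]; ring
    have s3j : ∑ l, W j l * ((x3 l : Act) : ℝ) = Sj - 2 * W j i := by
      rw [hx3, sum_mul_update, s1j, hdiag, v1j, hneg]; ring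
    -- utilities
    rw [utility, utility, v1i, v0i, s1i, s0i] at e1
    rw [utility, utility, v3j, v1j, s3j, s1j] at e2
    rw [utility, utility, v2j, v0j, s2j, s0j] at e3
    rw [utility, utility, v3i, v2i, s3i, s2i] at e4
    linarith
  · intro hsym
    refine ⟨fun x => (∑ k, h k * ((x k : Act) : ℝ))
      + (1/2) * ∑ k, ∑ l, W k l * ((x k : Act) : ℝ) * ((x l : Act) : ℝ), ?_⟩
    intro i x y hxy
    set S := ∑ l, W i l * ((x l : Act) : ℝ) with hS
    have hSy : ∑ l, W i l * ((y l : Act) : ℝ) = S := by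
      rw [hS]
      refine Finset.sum_congr rfl fun l _ => ?_
      by_cases hl : l = i
      · subst hl; rw [hdiag]; ring
      · rw [hxy l hl]
    have hlin : (∑ k, h k * ((y k : Act) : ℝ)) - (∑ k, h k * ((x k : Act) : ℝ))
        = h i * (((y i : Act) : ℝ) - ((x i : Act) : ℝ)) := by
      rw [← Finset.sum_sub_distrib, Finset.sum_eq_single i]
      · ring
      · intro b _ hb; rw [hxy b hb]; ring
      · intro hi; exact absurd (Finset.mem_univ i) hi
    have hquad : (∑ k, ∑ l, W k l * ((y k : Act) : ℝ) * ((y l : Act) : ℝ))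
        - (∑ k, ∑ l, W k l * ((x k : Act) : ℝ) * ((x l : Act) : ℝ))
        = 2 * (((y i : Act) : ℝ) - ((x i : Act) : ℝ)) * S := by
      have hsplit : ∀ k l : V,
          W k l * ((y k : Act) : ℝ) * ((y l : Act) : ℝ)
            - W k l * ((x k : Act) : ℝ) * ((x l : Act) : ℝ)
          = (((y k : Act) : ℝ) - ((x k : Act) : ℝ)) * (W k l * ((x l : Act) : ℝ))
            + (((y l : Act) : ℝ) - ((x l : Act) : ℝ)) * (W k l * ((y k : Act) : ℝ)) := by
        intro k l; ring
      rw [← Finset.sum_sub_distrib]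
      have : ∀ k ∈ Finset.univ,
          (∑ l, W k l * ((y k : Act) : ℝ) * ((y l : Act) : ℝ))
            - (∑ l, W k l * ((x k : Act) : ℝ) * ((x l : Act) : ℝ))
          = (∑ l, (((y k : Act) : ℝ) - ((x k : Act) : ℝ)) * (W k l * ((x l : Act) : ℝ)))
            + (∑ l, (((y l : Act) : ℝ) - ((x l : Act) : ℝ)) * (W k l * ((y k : Act) : ℝ))) := by
        intro k _
        rw [← Finset.sum_sub_distrib, ← Finset.sum_add_distrib]
        exact Finset.sum_congr rfl fun l _ => hsplit k l
      rw [Finset.sum_congr rfl this, Finset.sum_add_distrib]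
      have hA : (∑ k, ∑ l, (((y k : Act) : ℝ) - ((x k : Act) : ℝ)) * (W k l * ((x l : Act) : ℝ)))
          = (((y i : Act) : ℝ) - ((x i : Act) : ℝ)) * S := by
        rw [Finset.sum_eq_single i]
        · rw [← Finset.mul_sum, hS]
        · intro b _ hb
          refine Finset.sum_eq_zero fun l _ => ?_
          rw [hxy b hb]; ring
        · intro hi; exact absurd (Finset.mem_univ i) hi
      have hB : (∑ k, ∑ l, (((y l : Act) : ℝ) - ((x l : Act) : ℝ)) * (W k l * ((y k : Act) : ℝ)))
          = (((y i : Act) : ℝ) - ((x i : Act) : ℝ)) * S := by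
        rw [Finset.sum_comm, Finset.sum_eq_single i]
        · rw [← Finset.mul_sum]
          congr 1
          rw [← hSy]
          exact Finset.sum_congr rfl fun k _ => by rw [hsym k i]
        · intro b _ hb
          refine Finset.sum_eq_zero fun l _ => ?_
          rw [hxy b hb]; ring
        · intro hi; exact absurd (Finset.mem_univ i) hi
      rw [hA, hB]; ring
    rw [utility, utility, hSy]
    linarith
end
end

section
/- Suppose the weight matrix W of a network (V, W) is symmetric, and let Φ(x) = (1/2) Σ_{i,j∈V} W_ij x_i x_j + Σ_{i∈V} h_i x_i. Then there exists a globally BR-stable set N̄ of strategy profiles of the signed network coordination game on (V, W) with external field h such that argmax_{x∈A^V} Φ(x) ⊆ N̄ ⊆ N, where N is the set of Nash equilibria. -/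
open Finset Function

noncomputable section

/-!
`Φ` is an exact potential of the game: a unilateral change of `x i` changes `Φ` by exactly the
change of `u_i` (this needs the symmetry of `W` and its zero diagonal). Hence `Φ` never decreases
along a BR-path, and a BR-step that leaves `Φ` unchanged can be undone. Take `N̄` to be the set of
recurrent profiles, those that can be reached back from every profile reachable from them (the
union of the terminal classes of the BR-graph). On a finite set it is reachable from everywhere and
invariant; a maximiser of `Φ` is recurrent, since every step out of it is a tie; and a recurrent
profile is a Nash equilibrium, since a profitable deviation strictly increases `Φ` and so could
never be undone.
-/

namespace Relation

variable {α : Type*} {r : α → α → Prop}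

def IsRecurrent (r : α → α → Prop) (x : α) : Prop :=
  ∀ y, ReflTransGen r x y → ReflTransGen r y x

theorem IsRecurrent.of_reflTransGen {x y : α} (hx : IsRecurrent r x)
    (hxy : ReflTransGen r x y) : IsRecurrent r y :=
  fun z hyz => (hx z (hxy.trans hyz)).trans hxy

/-- A state whose reachable set has minimal size is recurrent. -/
theorem exists_isRecurrent [Finite α] (r : α → α → Prop) (x : α) :
    ∃ y, ReflTransGen r x y ∧ IsRecurrent r y := by
  obtain ⟨y, hxy, hmin⟩ := Set.exists_min_image {y | ReflTransGen r x y}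
    (fun y => {z | ReflTransGen r y z}.ncard) (Set.toFinite _) ⟨x, .refl⟩
  refine ⟨y, hxy, fun z hyz => ?_⟩
  have hsub : {w | ReflTransGen r z w} ⊆ {w | ReflTransGen r y w} := fun w hzw => hyz.trans hzw
  have heq := Set.eq_of_subset_of_ncard_le hsub (hmin z (hxy.trans hyz)) (Set.toFinite _)
  exact heq.symm.subset (ReflTransGen.refl : ReflTransGen r y y)

variable {β : Type*} [Preorder β] {f : α → β}

theorem ReflTransGen.le_of_forall_rel_le (hf : ∀ a b, r a b → f a ≤ f b) {x y : α}
    (hxy : ReflTransGen r x y) : f x ≤ f y := by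
  induction hxy with
  | refl => exact le_rfl
  | tail _ hbc ih => exact ih.trans (hf _ _ hbc)

theorem IsRecurrent.not_lt (hf : ∀ a b, r a b → f a ≤ f b) {x y : α} (hx : IsRecurrent r x)
    (hxy : r x y) : ¬f x < f y :=
  fun hlt => (ReflTransGen.le_of_forall_rel_le hf (hx y (.single hxy))).not_gt hlt

theorem isRecurrent_of_forall_le (hf : ∀ a b, r a b → f a ≤ f b)
    (hrev : ∀ a b, r a b → f b ≤ f a → r b a) {x : α} (hmax : ∀ y, f y ≤ f x) :
    IsRecurrent r x := by
  intro y hxy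
  induction hxy with
  | refl => exact .refl
  | tail hxb hbc ih =>
    exact .head (hrev _ _ hbc ((hmax _).trans (ReflTransGen.le_of_forall_rel_le hf hxb))) ih

end Relation

instance : Finite Act :=
  Set.Finite.to_subtype (s := {r : ℝ | r = 1 ∨ r = -1}) ((Set.toFinite {1, -1}).subset fun _ h => h)

theorem Act.eq_of_ne_of_ne {a b c : Act} (hac : a ≠ c) (hbc : b ≠ c) : a = b := by
  obtain ⟨a, ha | ha⟩ := a <;> obtain ⟨b, hb | hb⟩ := b <;> obtain ⟨c, hc | hc⟩ := c <;>
    simp_all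

theorem coe_update {V : Type*} [DecidableEq V] (x : V → Act) (i : V) (a : Act) :
    (fun k => (update x i a k : ℝ)) = update (fun k => (x k : ℝ)) i a :=
  funext fun k => apply_update (fun _ => Subtype.val) x i a k

section Game

variable {V : Type*} [Fintype V] [DecidableEq V] {W : V → V → ℝ} {h : V → ℝ}

def potential (W : V → V → ℝ) (h : V → ℝ) (x : V → Act) : ℝ :=
  (1 / 2) * ∑ i, ∑ j, W i j * (x i : ℝ) * (x j : ℝ) + ∑ i, h i * (x i : ℝ)

theorem sum_mul_update_sub (ξ : V → ℝ) (i : V) (t : ℝ) (g : V → ℝ) :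
    ∑ k, (update ξ i t k - ξ k) * g k = (t - ξ i) * g i := by
  rw [Finset.sum_eq_single i (fun k _ hk => by simp [hk]) (by simp)]
  simp

theorem sum_mul_update_of_diag_eq_zero (hdiag : ∀ i, W i i = 0) (ξ : V → ℝ) (i : V) (t : ℝ) :
    ∑ j, W i j * update ξ i t j = ∑ j, W i j * ξ j := by
  refine Finset.sum_congr rfl fun j _ => ?_
  rcases eq_or_ne j i with rfl | hj
  · simp [hdiag]
  · rw [update_of_ne hj]

theorem quadForm_update_sub (hdiag : ∀ i, W i i = 0) (hsymm : ∀ i j, W i j = W j i)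
    (ξ : V → ℝ) (i : V) (t : ℝ) :
    ∑ k, ∑ j, W k j * update ξ i t k * update ξ i t j - ∑ k, ∑ j, W k j * ξ k * ξ j
      = 2 * (t - ξ i) * ∑ j, W i j * ξ j := by
  set η := update ξ i t
  have hsplit : ∑ k, ∑ j, W k j * η k * η j - ∑ k, ∑ j, W k j * ξ k * ξ j
      = ∑ k, (η k - ξ k) * ∑ j, W k j * η j + ∑ j, (η j - ξ j) * ∑ k, W j k * ξ k := by
    simp only [Finset.mul_sum, ← Finset.sum_sub_distrib]
    rw [Finset.sum_comm (f := fun j k => (η j - ξ j) * (W j k * ξ k)), ← Finset.sum_add_distrib]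
    refine Finset.sum_congr rfl fun k _ => ?_
    rw [← Finset.sum_add_distrib]
    refine Finset.sum_congr rfl fun j _ => ?_
    rw [hsymm j k]; ring
  rw [hsplit, sum_mul_update_sub, sum_mul_update_sub, sum_mul_update_of_diag_eq_zero hdiag]
  ring

theorem utility_update_sub (hdiag : ∀ i, W i i = 0) (i : V) (x : V → Act) (a : Act) :
    utility W h i (update x i a) - utility W h i x
      = ((a : ℝ) - x i) * (h i + ∑ j, W i j * (x j : ℝ)) := by
  have hrow := sum_mul_update_of_diag_eq_zero hdiag (fun k => (x k : ℝ)) i a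
  rw [← coe_update] at hrow
  simp only [utility, hrow, update_self]
  ring

theorem potential_update_sub (hdiag : ∀ i, W i i = 0) (hsymm : ∀ i j, W i j = W j i)
    (i : V) (x : V → Act) (a : Act) :
    potential W h (update x i a) - potential W h x
      = utility W h i (update x i a) - utility W h i x := by
  have hquad := quadForm_update_sub hdiag hsymm (fun k => (x k : ℝ)) i a
  have hfield := sum_mul_update_sub (fun k => (x k : ℝ)) i a h
  simp only [← coe_update, mul_comm _ (h _), mul_sub, Finset.sum_sub_distrib] at hquad hfield
  rw [utility_update_sub hdiag]
  unfold potential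
  linear_combination (1 / 2 : ℝ) * hquad + hfield

theorem brStep_iff {x y : V → Act} :
    BRStep W h x y ↔ ∃ i a, a ≠ x i ∧ a ∈ bestResponse W h i x ∧ update x i a = y := by
  constructor
  · rintro ⟨i, hoff, hne, hbr⟩
    exact ⟨i, y i, hne, hbr, update_eq_iff.2 ⟨rfl, fun j hj => (hoff j hj).symm⟩⟩
  · rintro ⟨i, a, hne, hbr, rfl⟩
    exact ⟨i, fun j hj => update_of_ne hj _ _, by simpa using hne, by simpa using hbr⟩

theorem utility_le_of_mem_bestResponse {i : V} {x : V → Act} {a : Act}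
    (hbr : a ∈ bestResponse W h i x) : utility W h i x ≤ utility W h i (update x i a) := by
  simpa using hbr (x i)

variable (hdiag : ∀ i, W i i = 0) (hsymm : ∀ i j, W i j = W j i)
include hdiag hsymm

theorem potential_le_of_brStep {x y : V → Act} (hxy : BRStep W h x y) :
    potential W h x ≤ potential W h y := by
  obtain ⟨i, a, -, hbr, rfl⟩ := brStep_iff.1 hxy
  linarith [potential_update_sub (h := h) hdiag hsymm i x a, utility_le_of_mem_bestResponse hbr]

theorem brStep_symm_of_potential_le {x y : V → Act} (hxy : BRStep W h x y)
    (hle : potential W h y ≤ potential W h x) : BRStep W h y x := by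
  obtain ⟨i, a, hne, hbr, rfl⟩ := brStep_iff.1 hxy
  have htie : utility W h i (update x i a) ≤ utility W h i x := by
    linarith [potential_update_sub (h := h) hdiag hsymm i x a]
  refine brStep_iff.2 ⟨i, x i, by simpa using hne.symm, fun b => ?_, by simp⟩
  simpa using (hbr b).trans htie

theorem isNash_of_isRecurrent {x : V → Act} (hx : Relation.IsRecurrent (BRStep W h) x) :
    IsNash W h x := by
  intro i b
  by_contra hlt
  rw [not_le, update_eq_self] at hlt
  have hne : b ≠ x i := by rintro rfl; simp at hlt
  have hstep : BRStep W h x (update x i b) := by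
    refine brStep_iff.2 ⟨i, b, hne, fun c => ?_, rfl⟩
    rcases eq_or_ne c b with rfl | hcb
    · exact le_rfl
    · rw [Act.eq_of_ne_of_ne hcb hne.symm, update_eq_self]
      exact hlt.le
  refine hx.not_lt (fun _ _ hab => potential_le_of_brStep hdiag hsymm hab) hstep ?_
  linarith [potential_update_sub (h := h) hdiag hsymm i x b]

end Game

theorem stmt2_general {V : Type*} [Fintype V] [DecidableEq V]
    (W : V → V → ℝ) (h : V → ℝ) (hdiag : ∀ i, W i i = 0)
    (hsymm : ∀ i j, W i j = W j i)
    (Φ : (V → Act) → ℝ)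
    (hΦ : ∀ x : V → Act,
      Φ x = (1 / 2) * ∑ i, ∑ j, W i j * (x i : ℝ) * (x j : ℝ)
            + ∑ i, h i * (x i : ℝ)) :
    ∃ Nbar : Set (V → Act), GloballyBRStable W h Nbar ∧
      {x : V → Act | ∀ y : V → Act, Φ y ≤ Φ x} ⊆ Nbar ∧
      Nbar ⊆ {x : V → Act | IsNash W h x} := by
  obtain rfl : Φ = potential W h := funext hΦ
  refine ⟨{x | Relation.IsRecurrent (BRStep W h) x}, ⟨fun x => ?_, ?_⟩, fun x hmax => ?_,
    fun x hx => isNash_of_isRecurrent hdiag hsymm hx⟩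
  · obtain ⟨y, hxy, hy⟩ := Relation.exists_isRecurrent (BRStep W h) x
    exact ⟨y, hy, hxy⟩
  · exact fun x hx y hxy => hx.of_reflTransGen hxy
  · exact Relation.isRecurrent_of_forall_le
      (fun _ _ hab => potential_le_of_brStep hdiag hsymm hab)
      (fun _ _ hab => brStep_symm_of_potential_le hdiag hsymm hab) hmax

theorem stmt2 {V : Type*} [Fintype V] [DecidableEq V] [Nonempty V]
    (W : V → V → ℝ) (h : V → ℝ) (hdiag : ∀ i, W i i = 0)
    (hsymm : ∀ i j, W i j = W j i)
    (Φ : (V → Act) → ℝ)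
    (hΦ : ∀ x : V → Act,
      Φ x = (1 / 2) * ∑ i, ∑ j, W i j * (x i : ℝ) * (x j : ℝ)
            + ∑ i, h i * (x i : ℝ)) :
    ∃ Nbar : Set (V → Act), GloballyBRStable W h Nbar ∧
      {x : V → Act | ∀ y : V → Act, Φ y ≤ Φ x} ⊆ Nbar ∧
      Nbar ⊆ {x : V → Act | IsNash W h x} :=
  stmt2_general W h hdiag hsymm Φ hΦ
end
end

section
/- If the weight matrix W of a network (V, W) is non-negative (W_ij ≥ 0 for all i, j ∈ V), then the set N of Nash equilibria of the signed network coordination game on (V, W) with external field h is nonempty and globally BR-reachable. -/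
open Finset Function

noncomputable section

local instance : DecidableEq Act := Classical.decEq _

lemma act_cases (a : Act) : a = onePt ∨ a = negOnePt := by
  rcases a with ⟨r, hr | hr⟩
  · exact Or.inl (Subtype.ext hr)
  · exact Or.inr (Subtype.ext hr)

/-- The "field" seen by player `i`. -/
def Fld {V : Type*} [Fintype V] (W : V → V → ℝ) (h : V → ℝ) (i : V) (x : V → Act) : ℝ :=
  h i + ∑ j, W i j * (x j : ℝ)

lemma utility_update {V : Type*} [Fintype V] [DecidableEq V] (W : V → V → ℝ) (h : V → ℝ)
    (hdiag : ∀ i, W i i = 0) (i : V) (x : V → Act) (b : Act) :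
    utility W h i (Function.update x i b) = (b : ℝ) * Fld W h i x := by
  have hsum : ∑ j, W i j * ((Function.update x i b j : Act) : ℝ)
      = ∑ j, W i j * (x j : ℝ) := by
    apply Finset.sum_congr rfl
    intro j _
    by_cases hj : j = i
    · subst hj; simp [hdiag]
    · simp [Function.update_of_ne hj]
  simp only [utility, Function.update_self, hsum, Fld]
  ring

lemma mem_bestResponse_iff {V : Type*} [Fintype V] [DecidableEq V] (W : V → V → ℝ) (h : V → ℝ)
    (hdiag : ∀ i, W i i = 0) (i : V) (x : V → Act) (a : Act) :
    a ∈ bestResponse W h i x ↔ 0 ≤ (a : ℝ) * Fld W h i x := by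
  simp only [bestResponse, Set.mem_setOf_eq, utility_update W h hdiag]
  constructor
  · intro H
    have := H (actNeg a)
    have ha : ((actNeg a : Act) : ℝ) = -(a : ℝ) := rfl
    rw [ha] at this
    linarith
  · intro H b
    rcases act_cases a with ha | ha <;> rcases act_cases b with hb | hb <;>
      subst ha <;> subst hb <;>
      simp only [onePt, negOnePt] at H ⊢ <;> push_cast <;> linarith

lemma Fld_mono {V : Type*} [Fintype V] (W : V → V → ℝ) (h : V → ℝ)
    (hpos : ∀ i j, 0 ≤ W i j) (i : V) {x y : V → Act}
    (hxy : ∀ j, (x j : ℝ) ≤ (y j : ℝ)) : Fld W h i x ≤ Fld W h i y := by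
  unfold Fld
  gcongr with j _
  · exact hpos i j
  · exact hxy j

lemma one_ne_negOne : onePt ≠ negOnePt := by
  intro hc
  have : (1 : ℝ) = -1 := congrArg Subtype.val hc
  norm_num at this

/-- Phase 1: flip `-1` players up while they weakly prefer `+1`. -/
lemma phase1 {V : Type*} [Fintype V] [DecidableEq V] (W : V → V → ℝ) (h : V → ℝ)
    (hdiag : ∀ i, W i i = 0) (hpos : ∀ i j, 0 ≤ W i j) :
    ∀ n (x : V → Act), (Finset.univ.filter fun i => x i = negOnePt).card ≤ n →
      ∃ y, Relation.ReflTransGen (BRStep W h) x y ∧ (∀ j, (x j : ℝ) ≤ (y j : ℝ)) ∧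
        ∀ i, y i = negOnePt → Fld W h i y < 0 := by
  intro n
  induction n with
  | zero =>
    intro x hx
    refine ⟨x, Relation.ReflTransGen.refl, fun j => le_refl _, ?_⟩
    intro i hi
    exfalso
    have : i ∈ Finset.univ.filter fun i => x i = negOnePt :=
      Finset.mem_filter.mpr ⟨Finset.mem_univ i, hi⟩
    have := Finset.card_pos.mpr ⟨i, this⟩
    omega
  | succ n ih =>
    intro x hx
    by_cases hex : ∃ i, x i = negOnePt ∧ 0 ≤ Fld W h i x
    · obtain ⟨i, hi, hF⟩ := hex
      set x' := Function.update x i onePt with hx'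
      have hstep : BRStep W h x x' := by
        refine ⟨i, fun j hj => Function.update_of_ne hj _ _, ?_, ?_⟩
        · rw [hx', Function.update_self, hi]; exact one_ne_negOne
        · rw [hx', Function.update_self, mem_bestResponse_iff W h hdiag]
          simpa [onePt] using hF
      have hmono : ∀ j, (x j : ℝ) ≤ (x' j : ℝ) := by
        intro j
        by_cases hj : j = i
        · subst hj; rw [hx', Function.update_self, hi]; norm_num [onePt, negOnePt]
        · rw [hx', Function.update_of_ne hj]
      have hcard : (Finset.univ.filter fun j => x' j = negOnePt).card ≤ n := by
        have hss : (Finset.univ.filter fun j => x' j = negOnePt) ⊂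
            (Finset.univ.filter fun j => x j = negOnePt) := by
          constructor
          · intro j hj
            rw [Finset.mem_filter] at hj ⊢
            refine ⟨Finset.mem_univ j, ?_⟩
            by_cases hji : j = i
            · subst hji
              rw [hx', Function.update_self] at hj
              exact absurd hj.2 one_ne_negOne
            · rw [hx', Function.update_of_ne hji] at hj; exact hj.2
          · intro hsub
            have hmem : i ∈ Finset.univ.filter fun j => x j = negOnePt :=
              Finset.mem_filter.mpr ⟨Finset.mem_univ i, hi⟩
            have := hsub hmem
            rw [Finset.mem_filter, hx', Function.update_self] at this
            exact one_ne_negOne this.2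
        have := Finset.card_lt_card hss
        omega
      obtain ⟨y, hpath, hmono', hfin⟩ := ih x' hcard
      exact ⟨y, Relation.ReflTransGen.head hstep hpath,
        fun j => le_trans (hmono j) (hmono' j), hfin⟩
    · push_neg at hex
      exact ⟨x, Relation.ReflTransGen.refl, fun j => le_refl _,
        fun i hi => hex i hi⟩

/-- Phase 2: flip `+1` players down while they strictly prefer `-1`. -/
lemma phase2 {V : Type*} [Fintype V] [DecidableEq V] (W : V → V → ℝ) (h : V → ℝ)
    (hdiag : ∀ i, W i i = 0) (hpos : ∀ i j, 0 ≤ W i j) :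
    ∀ n (x : V → Act), (Finset.univ.filter fun i => x i = onePt).card ≤ n →
      (∀ i, x i = negOnePt → Fld W h i x ≤ 0) →
      ∃ y, Relation.ReflTransGen (BRStep W h) x y ∧ IsNash W h y := by
  intro n
  induction n with
  | zero =>
    intro x hx hinv
    refine ⟨x, Relation.ReflTransGen.refl, ?_⟩
    intro i
    rw [mem_bestResponse_iff W h hdiag]
    rcases act_cases (x i) with hi | hi
    · exfalso
      have : i ∈ Finset.univ.filter fun i => x i = onePt :=
        Finset.mem_filter.mpr ⟨Finset.mem_univ i, hi⟩
      have := Finset.card_pos.mpr ⟨i, this⟩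
      omega
    · have := hinv i hi
      rw [hi]
      simp only [negOnePt]
      push_cast
      linarith
  | succ n ih =>
    intro x hx hinv
    by_cases hex : ∃ i, x i = onePt ∧ Fld W h i x < 0
    · obtain ⟨i, hi, hF⟩ := hex
      set x' := Function.update x i negOnePt with hx'
      have hstep : BRStep W h x x' := by
        refine ⟨i, fun j hj => Function.update_of_ne hj _ _, ?_, ?_⟩
        · rw [hx', Function.update_self, hi]
          exact fun hc => one_ne_negOne hc.symm
        · rw [hx', Function.update_self, mem_bestResponse_iff W h hdiag]
          simp only [negOnePt]
          push_cast
          linarith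
      have hmono : ∀ j, (x' j : ℝ) ≤ (x j : ℝ) := by
        intro j
        by_cases hj : j = i
        · subst hj; rw [hx', Function.update_self, hi]; norm_num [onePt, negOnePt]
        · rw [hx', Function.update_of_ne hj]
      have hinv' : ∀ j, x' j = negOnePt → Fld W h j x' ≤ 0 := by
        intro j hj
        have hle : Fld W h j x' ≤ Fld W h j x := Fld_mono W h hpos j hmono
        by_cases hji : j = i
        · subst hji; linarith
        · rw [hx', Function.update_of_ne hji] at hj
          exact le_trans hle (hinv j hj)
      have hcard : (Finset.univ.filter fun j => x' j = onePt).card ≤ n := by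
        have hss : (Finset.univ.filter fun j => x' j = onePt) ⊂
            (Finset.univ.filter fun j => x j = onePt) := by
          constructor
          · intro j hj
            rw [Finset.mem_filter] at hj ⊢
            refine ⟨Finset.mem_univ j, ?_⟩
            by_cases hji : j = i
            · subst hji
              rw [hx', Function.update_self] at hj
              exact absurd hj.2.symm one_ne_negOne
            · rw [hx', Function.update_of_ne hji] at hj; exact hj.2
          · intro hsub
            have hmem : i ∈ Finset.univ.filter fun j => x j = onePt :=
              Finset.mem_filter.mpr ⟨Finset.mem_univ i, hi⟩
            have := hsub hmem
            rw [Finset.mem_filter, hx', Function.update_self] at this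
            exact one_ne_negOne this.2.symm
        have := Finset.card_lt_card hss
        omega
      obtain ⟨y, hpath, hnash⟩ := ih x' hcard hinv'
      exact ⟨y, Relation.ReflTransGen.head hstep hpath, hnash⟩
    · push_neg at hex
      refine ⟨x, Relation.ReflTransGen.refl, ?_⟩
      intro i
      rw [mem_bestResponse_iff W h hdiag]
      rcases act_cases (x i) with hi | hi
      · have := hex i hi
        rw [hi]; simp only [onePt]; push_cast; linarith
      · have := hinv i hi
        rw [hi]; simp only [negOnePt]; push_cast; linarith

theorem stmt4 {V : Type*} [Fintype V] [DecidableEq V] [Nonempty V]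
    (W : V → V → ℝ) (h : V → ℝ) (hdiag : ∀ i, W i i = 0)
    (hpos : ∀ i j, 0 ≤ W i j) :
    ({x : V → Act | IsNash W h x}).Nonempty ∧
    GloballyBRReachable W h {x : V → Act | IsNash W h x} := by
  have key : ∀ x : V → Act, ∃ y, Relation.ReflTransGen (BRStep W h) x y ∧ IsNash W h y := by
    intro x
    obtain ⟨z, hpath1, _, hz⟩ := phase1 W h hdiag hpos
      (Finset.univ.filter fun i => x i = negOnePt).card x le_rfl
    obtain ⟨y, hpath2, hy⟩ := phase2 W h hdiag hpos
      (Finset.univ.filter fun i => z i = onePt).card z le_rfl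
      (fun i hi => le_of_lt (hz i hi))
    exact ⟨y, hpath1.trans hpath2, hy⟩
  constructor
  · obtain ⟨y, _, hy⟩ := key (fun _ => onePt)
    exact ⟨y, hy⟩
  · intro x
    obtain ⟨y, hpath, hy⟩ := key x
    exact ⟨y, hy, hpath⟩
end
end

section
/- If a network (V, W) is structurally balanced, then the set N of Nash equilibria of the signed network coordination game on (V, W) with external field h is nonempty and globally BR-reachable. -/
open Finset Function

noncomputable section

section Aux

variable {V : Type*} [Fintype V] [DecidableEq V]

/-- local field of player `i` -/
def gfield (W : V → V → ℝ) (h : V → ℝ) (i : V) (x : V → Act) : ℝ :=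
  h i + ∑ j, W i j * (x j : ℝ)

lemma act_vals (a : Act) : (a : ℝ) = 1 ∨ (a : ℝ) = -1 := a.2

lemma actNeg_ne (a : Act) : actNeg a ≠ a := by
  intro hcontra
  have : -(a : ℝ) = (a : ℝ) := congrArg Subtype.val hcontra
  rcases a.2 with h1 | h1 <;> rw [h1] at this <;> norm_num at this

lemma util_update (W : V → V → ℝ) (h : V → ℝ) (hdiag : ∀ i, W i i = 0)
    (i : V) (x : V → Act) (a : Act) :
    utility W h i (Function.update x i a) = (a : ℝ) * gfield W h i x := by
  have hsum : ∑ j, W i j * ((Function.update x i a j : Act) : ℝ)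
      = ∑ j, W i j * ((x j : Act) : ℝ) := by
    apply Finset.sum_congr rfl
    intro j _
    by_cases hj : j = i
    · subst hj; simp [hdiag]
    · simp [Function.update_of_ne hj]
  simp only [utility, Function.update_self, hsum, gfield]
  ring

lemma mem_BR_iff (W : V → V → ℝ) (h : V → ℝ) (hdiag : ∀ i, W i i = 0)
    (i : V) (x : V → Act) (a : Act) :
    a ∈ bestResponse W h i x ↔ 0 ≤ (a : ℝ) * gfield W h i x := by
  simp only [bestResponse, Set.mem_setOf_eq, util_update W h hdiag]
  constructor
  · intro H
    have := H (actNeg a)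
    have hc : ((actNeg a : Act) : ℝ) = -(a : ℝ) := rfl
    rw [hc] at this
    linarith
  · intro H b
    rcases a.2 with h1 | h1 <;> rcases b.2 with h2 | h2 <;>
      rw [h1] at H ⊢ <;> rw [h2] <;> linarith

lemma gfield_update (W : V → V → ℝ) (h : V → ℝ) (j i : V) (b : Act) (x : V → Act) :
    gfield W h j (Function.update x i b) = gfield W h j x + W j i * ((b : ℝ) - (x i : ℝ)) := by
  simp only [gfield]
  have : ∑ k, W j k * ((Function.update x i b k : Act) : ℝ)
      = ∑ k, (W j k * ((x k : Act) : ℝ) + if k = i then W j i * ((b : ℝ) - (x i : ℝ)) else 0) := by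
    apply Finset.sum_congr rfl
    intro k _
    by_cases hk : k = i
    · subst hk; simp [Function.update_self]; ring
    · simp [Function.update_of_ne hk, hk]
  rw [this, Finset.sum_add_distrib, Finset.sum_ite_eq' Finset.univ i]
  simp
  ring

lemma snc_aux (W : V → V → ℝ) (h : V → ℝ) (hdiag : ∀ i, W i i = 0)
    (σ : V → ℝ) (hσ : ∀ i, σ i = 1 ∨ σ i = -1)
    (hbal : ∀ i j, 0 ≤ W i j * (σ i * σ j)) (x : V → Act) :
    ∃ y, IsNash W h y ∧ Relation.ReflTransGen (BRStep W h) x y := by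
  classical
  set g := gfield W h with hg
  have hsx : ∀ (z : V → Act) (j : V), σ j * ((z j : Act) : ℝ) = 1 ∨ σ j * ((z j : Act) : ℝ) = -1 := by
    intro z j
    rcases hσ j with h1 | h1 <;> rcases (z j).2 with h2 | h2 <;> rw [h1, h2] <;> norm_num
  have hσsq : ∀ j, σ j * σ j = 1 := by
    intro j; rcases hσ j with h1 | h1 <;> rw [h1] <;> norm_num
  -- Phase 1: flip low players up until all low players strictly prefer low
  have phase1 : ∀ n (x : V → Act),
      (Finset.univ.filter (fun i => σ i * ((x i : Act) : ℝ) = -1)).card ≤ n →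
      ∃ y, (∀ i, σ i * ((y i : Act) : ℝ) = -1 → 0 < ((y i : Act) : ℝ) * g i y) ∧
        Relation.ReflTransGen (BRStep W h) x y := by
    intro n
    induction n with
    | zero =>
      intro x hc
      refine ⟨x, ?_, Relation.ReflTransGen.refl⟩
      intro i hi
      exfalso
      have : i ∈ Finset.univ.filter (fun i => σ i * ((x i : Act) : ℝ) = -1) := by
        simp [hi]
      have := Finset.card_pos.mpr ⟨i, this⟩
      omega
    | succ n ih =>
      intro x hc
      by_cases hex : ∃ i, σ i * ((x i : Act) : ℝ) = -1 ∧ ((x i : Act) : ℝ) * g i x ≤ 0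
      · obtain ⟨i, hi1, hi2⟩ := hex
        set y := Function.update x i (actNeg (x i)) with hy
        have hyi : ((y i : Act) : ℝ) = -((x i : Act) : ℝ) := by
          rw [hy, Function.update_self]; rfl
        have hstep : BRStep W h x y := by
          refine ⟨i, fun j hj => Function.update_of_ne hj _ _, ?_, ?_⟩
          · rw [hy, Function.update_self]; exact actNeg_ne _
          · rw [mem_BR_iff W h hdiag, hyi, ← hg]
            linarith
        have hsub : Finset.univ.filter (fun j => σ j * ((y j : Act) : ℝ) = -1) ⊆
            (Finset.univ.filter (fun j => σ j * ((x j : Act) : ℝ) = -1)).erase i := by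
          intro j hj
          simp only [Finset.mem_filter, Finset.mem_univ, true_and] at hj
          rcases eq_or_ne j i with rfl | hji
          · exfalso; rw [hyi] at hj; nlinarith [hi1, hj]
          · rw [Finset.mem_erase]
            refine ⟨hji, ?_⟩
            simp only [Finset.mem_filter, Finset.mem_univ, true_and]
            rwa [hy, Function.update_of_ne hji] at hj
        have hmem : i ∈ Finset.univ.filter (fun j => σ j * ((x j : Act) : ℝ) = -1) := by
          simp [hi1]
        have hcard : (Finset.univ.filter (fun j => σ j * ((y j : Act) : ℝ) = -1)).card ≤ n := by
          have h1 := Finset.card_le_card hsub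
          rw [Finset.card_erase_of_mem hmem] at h1
          omega
        obtain ⟨z, hz1, hz2⟩ := ih y hcard
        exact ⟨z, hz1, Relation.ReflTransGen.head hstep hz2⟩
      · push_neg at hex
        exact ⟨x, hex, Relation.ReflTransGen.refl⟩
  -- Phase 2: flip high players down, preserving the low-player invariant
  have phase2 : ∀ n (x : V → Act),
      (Finset.univ.filter (fun i => σ i * ((x i : Act) : ℝ) = 1)).card ≤ n →
      (∀ i, σ i * ((x i : Act) : ℝ) = -1 → 0 < ((x i : Act) : ℝ) * g i x) →
      ∃ y, IsNash W h y ∧ Relation.ReflTransGen (BRStep W h) x y := by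
    intro n
    induction n with
    | zero =>
      intro x hc hinv
      refine ⟨x, ?_, Relation.ReflTransGen.refl⟩
      intro i
      rw [mem_BR_iff W h hdiag, ← hg]
      rcases hsx x i with hi | hi
      · exfalso
        have : i ∈ Finset.univ.filter (fun i => σ i * ((x i : Act) : ℝ) = 1) := by simp [hi]
        have := Finset.card_pos.mpr ⟨i, this⟩
        omega
      · linarith [hinv i hi]
    | succ n ih =>
      intro x hc hinv
      by_cases hex : ∃ i, σ i * ((x i : Act) : ℝ) = 1 ∧ ((x i : Act) : ℝ) * g i x < 0
      · obtain ⟨i, hi1, hi2⟩ := hex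
        set y := Function.update x i (actNeg (x i)) with hy
        have hyi : ((y i : Act) : ℝ) = -((x i : Act) : ℝ) := by
          rw [hy, Function.update_self]; rfl
        have hstep : BRStep W h x y := by
          refine ⟨i, fun j hj => Function.update_of_ne hj _ _, ?_, ?_⟩
          · rw [hy, Function.update_self]; exact actNeg_ne _
          · rw [mem_BR_iff W h hdiag, hyi, ← hg]
            linarith
        -- invariant preservation
        have hinv' : ∀ j, σ j * ((y j : Act) : ℝ) = -1 → 0 < ((y j : Act) : ℝ) * g j y := by
          intro j hj
          rcases eq_or_ne j i with rfl | hji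
          · have hgy : g j y = g j x + W j j * (((actNeg (x j) : Act) : ℝ) - ((x j : Act) : ℝ)) :=
              gfield_update W h j j (actNeg (x j)) x
            rw [hdiag] at hgy
            rw [hyi]
            simp only [zero_mul, add_zero] at hgy
            rw [hgy]
            linarith
          · have hyj : ((y j : Act) : ℝ) = ((x j : Act) : ℝ) := by
              rw [hy, Function.update_of_ne hji]
            have hgy : g j y = g j x + W j i * (((actNeg (x i) : Act) : ℝ) - ((x i : Act) : ℝ)) :=
              gfield_update W h j i (actNeg (x i)) x
            have hcoe : ((actNeg (x i) : Act) : ℝ) = -((x i : Act) : ℝ) := rfl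
            rw [hcoe] at hgy
            rw [hyj] at hj ⊢
            have hxlow := hinv j hj
            -- x i = σ i  and  x j = -σ j
            have hxi : ((x i : Act) : ℝ) = σ i := by
              have h2 : (σ i * σ i) * ((x i : Act) : ℝ) = σ i * 1 := by
                rw [mul_assoc, hi1]
              rw [hσsq i, one_mul, mul_one] at h2
              exact h2
            have hxj : ((x j : Act) : ℝ) = -σ j := by
              have h2 : (σ j * σ j) * ((x j : Act) : ℝ) = σ j * (-1) := by
                rw [mul_assoc, hj]
              rw [hσsq j, one_mul] at h2
              linarith
            have hkey : 0 ≤ -(2 * W j i * ((x i : Act) : ℝ) * ((x j : Act) : ℝ)) := by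
              rw [hxi, hxj]
              have := hbal j i
              nlinarith
            rw [hgy]
            nlinarith
        have hsub : Finset.univ.filter (fun j => σ j * ((y j : Act) : ℝ) = 1) ⊆
            (Finset.univ.filter (fun j => σ j * ((x j : Act) : ℝ) = 1)).erase i := by
          intro j hj
          simp only [Finset.mem_filter, Finset.mem_univ, true_and] at hj
          rcases eq_or_ne j i with rfl | hji
          · exfalso; rw [hyi] at hj; nlinarith [hi1, hj]
          · rw [Finset.mem_erase]
            refine ⟨hji, ?_⟩
            simp only [Finset.mem_filter, Finset.mem_univ, true_and]
            rwa [hy, Function.update_of_ne hji] at hj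
        have hmem : i ∈ Finset.univ.filter (fun j => σ j * ((x j : Act) : ℝ) = 1) := by
          simp [hi1]
        have hcard : (Finset.univ.filter (fun j => σ j * ((y j : Act) : ℝ) = 1)).card ≤ n := by
          have h1 := Finset.card_le_card hsub
          rw [Finset.card_erase_of_mem hmem] at h1
          omega
        obtain ⟨z, hz1, hz2⟩ := ih y hcard hinv'
        exact ⟨z, hz1, Relation.ReflTransGen.head hstep hz2⟩
      · push_neg at hex
        refine ⟨x, ?_, Relation.ReflTransGen.refl⟩
        intro i
        rw [mem_BR_iff W h hdiag, ← hg]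
        rcases hsx x i with hi | hi
        · exact hex i hi
        · linarith [hinv i hi]
  obtain ⟨y1, hy1, hp1⟩ := phase1 _ x le_rfl
  obtain ⟨y2, hy2, hp2⟩ := phase2 _ y1 le_rfl hy1
  exact ⟨y2, hy2, hp1.trans hp2⟩

end Aux

theorem stmt7 {V : Type*} [Fintype V] [DecidableEq V] [Nonempty V]
    (W : V → V → ℝ) (h : V → ℝ) (hdiag : ∀ i, W i i = 0)
    (hsb : StructurallyBalanced W) :
    ({x : V → Act | IsNash W h x}).Nonempty ∧
    GloballyBRReachable W h {x : V → Act | IsNash W h x} := by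
  classical
  obtain ⟨P, hPin, hPout⟩ := hsb
  set σ : V → ℝ := fun i => if i ∈ P then 1 else -1 with hσdef
  have hσ : ∀ i, σ i = 1 ∨ σ i = -1 := by
    intro i; by_cases hi : i ∈ P <;> simp [hσdef, hi]
  have hbal : ∀ i j, 0 ≤ W i j * (σ i * σ j) := by
    intro i j
    by_cases hi : i ∈ P <;> by_cases hj : j ∈ P <;>
      simp only [hσdef, hi, hj, if_true, if_false]
    · have := hPin i j (by tauto); nlinarith
    · have := hPout i j (by tauto); nlinarith
    · have := hPout i j (by tauto); nlinarith
    · have := hPin i j (by tauto); nlinarith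
  have hreach : GloballyBRReachable W h {x : V → Act | IsNash W h x} := by
    intro x
    obtain ⟨y, hy, hp⟩ := snc_aux W h hdiag σ hσ hbal x
    exact ⟨y, hy, hp⟩
  obtain ⟨y, hy, -⟩ := hreach (fun _ => onePt)
  exact ⟨⟨y, hy⟩, hreach⟩
end
end

section
/- Consider the signed network coordination game on a network (V, W) with external field h and a partition V = R ∪ S (R, S disjoint), and let τ ∈ {−1,+1}^R be such that τ_i W_ij τ_j ≥ 0 for all i, j ∈ R. Assume that w_i^R + τ_i h_i ≥ w_i^S for every i ∈ R, and that the set N_S^(τ) of Nash equilibria of the S-restricted game with the strategy profile of players in R frozen to τ is nonempty. Then there exists a Nash equilibrium x* of the SNC game such that x*_i = τ_i for every i ∈ R. -/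
open Finset Function

noncomputable section

lemma act_abs (a : Act) : |(a : ℝ)| = 1 := by
  rcases a.2 with h | h <;> rw [h] <;> norm_num

lemma br_iff {V : Type*} [Fintype V] [DecidableEq V] (W : V → V → ℝ) (h : V → ℝ)
    (hdiag : ∀ i, W i i = 0) (i : V) (x : V → Act) (a : Act) :
    a ∈ bestResponse W h i x ↔ 0 ≤ (a : ℝ) * (h i + ∑ j, W i j * (x j : ℝ)) := by
  have key : ∀ b : Act, utility W h i (Function.update x i b)
      = (b : ℝ) * (h i + ∑ j, W i j * (x j : ℝ)) := by
    intro b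
    unfold utility
    have hs : ∑ j, W i j * ((Function.update x i b j : Act) : ℝ)
        = ∑ j, W i j * (x j : ℝ) := by
      refine Finset.sum_congr rfl fun j _ => ?_
      by_cases hji : j = i
      · subst hji; simp [hdiag]
      · rw [Function.update_of_ne hji]
    rw [Function.update_self, hs]; ring
  constructor
  · intro ha
    have h2 := ha (actNeg a)
    rw [key, key] at h2
    have : ((actNeg a : Act) : ℝ) = -(a : ℝ) := rfl
    rw [this] at h2
    nlinarith
  · intro ha b
    rw [key, key]
    rcases a.2 with h1 | h1 <;> rcases b.2 with h2 | h2 <;>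
      rw [h1] at ha <;> rw [h1, h2] <;> nlinarith

lemma mul_eq_abs_of_nonneg {a b w : ℝ} (ha : a = 1 ∨ a = -1) (hb : b = 1 ∨ b = -1)
    (h : 0 ≤ a * w * b) : a * w * b = |w| := by
  rcases ha with rfl | rfl <;> rcases hb with rfl | rfl <;>
    simp only [one_mul, mul_one, mul_neg, neg_mul, neg_neg] at h ⊢ <;>
    first
      | exact (abs_of_nonneg h).symm
      | · rw [abs_of_nonpos (by linarith)]

theorem stmt9 {V : Type*} [Fintype V] [DecidableEq V] [Nonempty V]
    (W : V → V → ℝ) (h : V → ℝ) (hdiag : ∀ i, W i i = 0)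
    (R S : Finset V) (hUnion : R ∪ S = Finset.univ) (hDisj : Disjoint R S)
    (τ : {i // i ∈ R} → Act)
    (hτ : ∀ i j : {i // i ∈ R}, 0 ≤ (τ i : ℝ) * W i.1 j.1 * (τ j : ℝ))
    (hcoh : ∀ i : {i // i ∈ R},
      ∑ j ∈ S, |W i.1 j| ≤ (∑ j ∈ R, |W i.1 j|) + (τ i : ℝ) * h i.1)
    (hNS : ∃ z : {i // i ∈ S} → Act,
      IsNash (fun i j : {i // i ∈ S} => W i.1 j.1)
        (fun i : {i // i ∈ S} => h i.1 + ∑ j : {i // i ∈ R}, W i.1 j.1 * (τ j : ℝ)) z) :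
    ∃ x : V → Act, IsNash W h x ∧ ∀ i : {i // i ∈ R}, x i.1 = τ i := by
  obtain ⟨z, hz⟩ := hNS
  have memS : ∀ i : V, i ∉ R → i ∈ S := fun i hi =>
    (Finset.mem_union.1 (hUnion ▸ Finset.mem_univ i)).resolve_left hi
  classical
  set x : V → Act := fun i => if hi : i ∈ R then τ ⟨i, hi⟩ else z ⟨i, memS i hi⟩ with hxdef
  have hxR : ∀ i : {k // k ∈ R}, x i.1 = τ i := by
    intro i; simp only [hxdef, dif_pos i.2]
  have hxS : ∀ i : {k // k ∈ S}, x i.1 = z i := by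
    intro i
    have hiR : i.1 ∉ R := Finset.disjoint_right.1 hDisj i.2
    simp only [hxdef, dif_neg hiR]
  have hsum : ∀ i : V, ∑ j, W i j * ((x j : Act) : ℝ)
      = (∑ j : {k // k ∈ R}, W i j.1 * (τ j : ℝ))
        + ∑ j : {k // k ∈ S}, W i j.1 * (z j : ℝ) := by
    intro i
    have h1 : (∑ j : {k // k ∈ R}, W i j.1 * (τ j : ℝ))
        = ∑ j ∈ R, W i j * ((x j : Act) : ℝ) := by
      rw [← Finset.sum_attach R (fun j => W i j * ((x j : Act) : ℝ)),
        Finset.univ_eq_attach]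
      exact Finset.sum_congr rfl fun j _ => by rw [hxR j]
    have h2 : (∑ j : {k // k ∈ S}, W i j.1 * (z j : ℝ))
        = ∑ j ∈ S, W i j * ((x j : Act) : ℝ) := by
      rw [← Finset.sum_attach S (fun j => W i j * ((x j : Act) : ℝ)),
        Finset.univ_eq_attach]
      exact Finset.sum_congr rfl fun j _ => by rw [hxS j]
    rw [h1, h2, ← Finset.sum_union hDisj, hUnion]
  refine ⟨x, ?_, hxR⟩
  intro i
  rw [br_iff W h hdiag i x (x i), hsum i]
  by_cases hiR : i ∈ R
  · set iR : {k // k ∈ R} := ⟨i, hiR⟩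
    have hxi : x i = τ iR := hxR iR
    rw [hxi]
    have hR : (τ iR : ℝ) * (∑ j : {k // k ∈ R}, W i j.1 * (τ j : ℝ))
        = ∑ j ∈ R, |W i j| := by
      rw [Finset.mul_sum, ← Finset.sum_attach R (fun j => |W i j|),
        Finset.univ_eq_attach]
      refine Finset.sum_congr rfl fun j _ => ?_
      have := hτ iR j
      have heq := mul_eq_abs_of_nonneg (τ iR).2 (τ j).2 this
      rw [← heq]; ring
    have hS : -(∑ j ∈ S, |W i j|)
        ≤ (τ iR : ℝ) * ∑ j : {k // k ∈ S}, W i j.1 * (z j : ℝ) := by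
      rw [Finset.mul_sum, ← Finset.sum_attach S (fun j => |W i j|),
        Finset.univ_eq_attach, ← Finset.sum_neg_distrib]
      refine Finset.sum_le_sum fun j _ => ?_
      have habs : |(τ iR : ℝ) * (W i j.1 * (z j : ℝ))| = |W i j.1| := by
        rw [abs_mul, abs_mul, act_abs, act_abs, one_mul, mul_one]
      calc -|W i j.1| = -|(τ iR : ℝ) * (W i j.1 * (z j : ℝ))| := by rw [habs]
        _ ≤ _ := neg_abs_le _
    have hc := hcoh iR
    have expand : (τ iR : ℝ) * (h i + ((∑ j : {k // k ∈ R}, W i j.1 * (τ j : ℝ))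
          + ∑ j : {k // k ∈ S}, W i j.1 * (z j : ℝ)))
        = (τ iR : ℝ) * h i + (τ iR : ℝ) * (∑ j : {k // k ∈ R}, W i j.1 * (τ j : ℝ))
          + (τ iR : ℝ) * ∑ j : {k // k ∈ S}, W i j.1 * (z j : ℝ) := by ring
    rw [expand, hR]
    linarith
  · set iS : {k // k ∈ S} := ⟨i, memS i hiR⟩
    have hxi : x i = z iS := hxS iS
    rw [hxi]
    have hnash := hz iS
    rw [br_iff (fun a b : {k // k ∈ S} => W a.1 b.1)
      (fun a : {k // k ∈ S} => h a.1 + ∑ j : {k // k ∈ R}, W a.1 j.1 * (τ j : ℝ))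
      (fun a => hdiag a.1) iS z (z iS)] at hnash
    calc (0 : ℝ) ≤ _ := hnash
      _ = _ := by ring
end
end

section
/- Consider the signed network coordination game on a network (V, W) with external field h and a partition V = R ∪ S (R, S disjoint). Let τ ∈ {−1,+1}^R be such that τ_i W_ij τ_j ≥ 0 for all i, j ∈ R, and let h^+, h^− ∈ ℝ^R be defined by h^+_i = τ_i h_i + w_i^S and h^−_i = τ_i h_i − w_i^S for i ∈ R. Assume the τ-transformed subnetwork (R, W^[τ]_{RR}) with entries τ_i W_ij τ_j is (h^−, h^+)-indecomposable and w_i^R − |h_i| > w_i^S for every i ∈ R. If for each y ∈ {τ, −τ} the set N_S^(y) of Nash equilibria of the S-restricted game with the strategy profile of players in R frozen to y is globally BR-reachable for that restricted game, then the set N̄ = { x* ∈ N : x*_R ∈ {τ, −τ} } of Nash equilibria of the SNC game is nonempty and globally BR-reachable. -/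
open Finset Function

noncomputable section

/-!
Call a flip of a player of `R` robust if it is a best response whatever the players of `S` do.
Since `S` changes the field felt by `i ∈ R` by at most `w_i^S`, a flip is robust as soon as it is
a best response in the `τ`-twisted network on `R` for every external field in `[h^-, h^+]`.
Robustly let players join the set where `x` agrees with `τ` while possible, then let players
leave it while possible: leaving never enables joining, and when neither move is possible,
indecomposability forces the set to be all of `R` or empty, i.e. `x_R = ±τ`. At such a consensus
`w_i^R - |h_i| > w_i^S` makes every player of `R` strictly content whatever `S` plays, so freezing
`R` and following a best-response path of the restricted game to one of its equilibria ends in an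
equilibrium of the whole game.
-/

namespace SNC

lemma abs_act (a : Act) : |(a : ℝ)| = 1 := by
  rcases a.2 with h | h <;> simp [h]

@[simp]
lemma coe_actNeg (a : Act) : ((actNeg a : Act) : ℝ) = -a := rfl

lemma actNeg_ne (a : Act) : actNeg a ≠ a := by
  intro h
  have := congrArg Subtype.val h
  rcases a.2 with ha | ha <;> simp only [coe_actNeg, ha] at this <;> norm_num at this

lemma eq_actNeg_of_ne {a b : Act} (hab : a ≠ b) : a = actNeg b := by
  have hab' : (a : ℝ) ≠ b := fun h => hab (Subtype.ext h)
  ext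
  rcases a.2 with ha | ha <;> rcases b.2 with hb | hb <;> simp [ha, hb] at hab' ⊢

section Game

variable {V : Type*} [Fintype V] [DecidableEq V] (W : V → V → ℝ) (h : V → ℝ)

def field (x : V → Act) (i : V) : ℝ :=
  h i + ∑ j, W i j * (x j : ℝ)

variable {W h}

lemma field_update_self (hdiag : ∀ i, W i i = 0) (x : V → Act) (i : V) (a : Act) :
    field W h (update x i a) i = field W h x i := by
  unfold field
  congr 1
  refine sum_congr rfl fun j _ => ?_
  rcases eq_or_ne j i with rfl | hj
  · simp [hdiag]
  · rw [update_of_ne hj]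

lemma mem_bestResponse_iff (hdiag : ∀ i, W i i = 0) {i : V} {x : V → Act} {a : Act} :
    a ∈ bestResponse W h i x ↔ 0 ≤ (a : ℝ) * field W h x i := by
  have hutil : ∀ b : Act, utility W h i (update x i b) = b * field W h x i := by
    intro b
    rw [← field_update_self hdiag x i b, field, utility, update_self]
    ring
  simp only [bestResponse, Set.mem_ofPred_eq, hutil]
  constructor
  · intro ha
    have := ha (actNeg a)
    rw [coe_actNeg] at this
    linarith
  · intro ha b
    rcases a.2 with h1 | h1 <;> rcases b.2 with h2 | h2 <;> simp only [h1, h2] at ha ⊢ <;> linarith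

lemma brStep_update (hdiag : ∀ i, W i i = 0) {x : V → Act} {i : V} {a : Act}
    (hne : a ≠ x i) (ha : 0 ≤ (a : ℝ) * field W h x i) :
    BRStep W h x (update x i a) := by
  refine ⟨i, fun j hj => update_of_ne hj _ _, by rwa [update_self], ?_⟩
  rw [update_self]
  exact (mem_bestResponse_iff hdiag).2 ha

theorem _root_.GloballyBRReachable.nonempty {X : Set (V → Act)} (hX : GloballyBRReachable W h X) :
    X.Nonempty :=
  let ⟨y, hy, _⟩ := hX fun _ => onePt
  ⟨y, hy⟩

end Game

section Robust

variable {ι : Type*} [Fintype ι] [DecidableEq ι] (A : ι → ι → ℝ) (hm hp : ι → ℝ)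

/-- With the players of `Q` at `+1` and the others at `-1`, player `i ∉ Q` switches to `+1`
for every external field `≥ hm`. -/
def CanJoin (Q : Finset ι) (i : ι) : Prop :=
  i ∉ Q ∧ ∑ j ∈ Qᶜ, |A i j| - hm i < ∑ j ∈ Q, |A i j|

/-- With the players of `Q` at `+1` and the others at `-1`, player `i ∈ Q` switches to `-1`
for every external field `≤ hp`. -/
def CanLeave (Q : Finset ι) (i : ι) : Prop :=
  i ∈ Q ∧ ∑ j ∈ Q, |A i j| + hp i < ∑ j ∈ Qᶜ, |A i j|

def RobustStep (Q Q' : Finset ι) : Prop :=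
  (∃ i, CanJoin A hm Q i ∧ Q' = insert i Q) ∨ (∃ i, CanLeave A hp Q i ∧ Q' = Q.erase i)

variable {A hm hp}

theorem exists_robustStep_path_not_canJoin (Q : Finset ι) :
    ∃ Q', Relation.ReflTransGen (RobustStep A hm hp) Q Q' ∧ ∀ i, ¬ CanJoin A hm Q' i := by
  by_cases hjoin : ∃ i, CanJoin A hm Q i
  · obtain ⟨i, hi⟩ := hjoin
    obtain ⟨Q', hpath, hQ'⟩ := exists_robustStep_path_not_canJoin (insert i Q)
    exact ⟨Q', .head (Or.inl ⟨i, hi, rfl⟩) hpath, hQ'⟩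
  · exact ⟨Q, .refl, not_exists.1 hjoin⟩
termination_by Qᶜ.card
decreasing_by
  rw [compl_insert]
  exact card_erase_lt_of_mem (mem_compl.2 hi.1)

/-- Leaving can only make joining harder, for the leaver too since `hm ≤ hp`. -/
lemma not_canJoin_erase (hmp : hm ≤ hp) {Q : Finset ι} (hQ : ∀ j, ¬ CanJoin A hm Q j)
    {i : ι} (hi : CanLeave A hp Q i) (j : ι) : ¬ CanJoin A hm (Q.erase i) j := by
  rintro ⟨hjQ, hj⟩
  have hsub : ∑ k ∈ Q.erase i, |A j k| ≤ ∑ k ∈ Q, |A j k| :=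
    sum_le_sum_of_subset_of_nonneg (erase_subset i Q) fun _ _ _ => abs_nonneg _
  have hsup : ∑ k ∈ Qᶜ, |A j k| ≤ ∑ k ∈ (Q.erase i)ᶜ, |A j k| :=
    sum_le_sum_of_subset_of_nonneg (by simp [compl_erase]) fun _ _ _ => abs_nonneg _
  rcases eq_or_ne j i with rfl | hji
  · linarith [hi.2, hmp j]
  · exact hQ j ⟨fun h => hjQ (mem_erase.2 ⟨hji, h⟩), by linarith⟩

theorem exists_robustStep_path_stuck (hmp : hm ≤ hp) (Q : Finset ι)
    (hQ : ∀ i, ¬ CanJoin A hm Q i) :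
    ∃ Q', Relation.ReflTransGen (RobustStep A hm hp) Q Q' ∧
      (∀ i, ¬ CanJoin A hm Q' i) ∧ ∀ i, ¬ CanLeave A hp Q' i := by
  by_cases hleave : ∃ i, CanLeave A hp Q i
  · obtain ⟨i, hi⟩ := hleave
    obtain ⟨Q', hpath, hQ'⟩ :=
      exists_robustStep_path_stuck hmp (Q.erase i) (not_canJoin_erase hmp hQ hi)
    exact ⟨Q', .head (Or.inr ⟨i, hi, rfl⟩) hpath, hQ'⟩
  · exact ⟨Q, .refl, hQ, not_exists.1 hleave⟩
termination_by Q.card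
decreasing_by exact card_erase_lt_of_mem hi.1

lemma eq_univ_or_eq_empty_of_indecomposable (hind : Indecomposable A hm hp) {Q : Finset ι}
    (hjoin : ∀ i, ¬ CanJoin A hm Q i) (hleave : ∀ i, ¬ CanLeave A hp Q i) :
    Q = univ ∨ Q = ∅ := by
  by_contra! hQ
  rcases hind Q Qᶜ (union_compl Q) disjoint_compl_right hQ.2
      (nonempty_iff_ne_empty.2 ((compl_eq_empty_iff Q).not.2 hQ.1)) with ⟨i, hiQ, hi⟩ | ⟨i, hiQ, hi⟩
  · exact hleave i ⟨hiQ, hi⟩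
  · exact hjoin i ⟨mem_compl.1 hiQ, hi⟩

/-- The robustness lemma. -/
theorem exists_robustStep_path_consensus (hind : Indecomposable A hm hp)
    (hmp : hm ≤ hp) (Q : Finset ι) :
    ∃ Q', Relation.ReflTransGen (RobustStep A hm hp) Q Q' ∧ (Q' = univ ∨ Q' = ∅) := by
  obtain ⟨Q₁, hpath₁, hjoin₁⟩ := exists_robustStep_path_not_canJoin (A := A) (hp := hp) Q
  obtain ⟨Q₂, hpath₂, hjoin₂, hleave₂⟩ := exists_robustStep_path_stuck hmp Q₁ hjoin₁
  exact ⟨Q₂, hpath₁.trans hpath₂, eq_univ_or_eq_empty_of_indecomposable hind hjoin₂ hleave₂⟩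

end Robust

section Aligned

variable {V : Type*} {W : V → V → ℝ} {h : V → ℝ} {R S : Finset V}

/-- The `τ`-transformed network `W^[τ]_{RR}`. -/
def twist (W : V → V → ℝ) (τ : R → Act) (i j : R) : ℝ :=
  (τ i : ℝ) * W i j * τ j

def alignedSet (τ : R → Act) (x : V → Act) : Finset R :=
  univ.filter fun i => x i = τ i

@[simp]
lemma mem_alignedSet {τ : R → Act} {x : V → Act} {i : R} : i ∈ alignedSet τ x ↔ x i = τ i := by
  simp [alignedSet]

lemma abs_twist (τ : R → Act) (i j : R) : |twist W τ i j| = |W i j| := by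
  simp [twist, abs_mul, abs_act]

lemma twist_actNeg (W : V → V → ℝ) (τ : R → Act) : twist W (fun j => actNeg (τ j)) = twist W τ := by
  funext i j
  simp [twist]

lemma abs_act_mul_sum_le (a : Act) (c : V → ℝ) (x : V → Act) :
    |a * ∑ j ∈ S, c j * x j| ≤ ∑ j ∈ S, |c j| := by
  rw [abs_mul, abs_act, one_mul]
  refine (abs_sum_le_sum_abs _ _).trans_eq (sum_congr rfl fun j _ => ?_)
  rw [abs_mul, abs_act, mul_one]

variable [DecidableEq V]

lemma alignedSet_update_self (τ : R → Act) (x : V → Act) (i : R) :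
    alignedSet τ (update x i (τ i)) = insert i (alignedSet τ x) := by
  ext j
  rcases eq_or_ne j i with rfl | hji
  · simp
  · simp [hji]

lemma alignedSet_update_actNeg (τ : R → Act) (x : V → Act) (i : R) :
    alignedSet τ (update x i (actNeg (τ i))) = (alignedSet τ x).erase i := by
  ext j
  rcases eq_or_ne j i with rfl | hji
  · simp [actNeg_ne]
  · simp [hji]

variable [Fintype V]

lemma twist_mul_field (hUnion : R ∪ S = univ) (hDisj : Disjoint R S) (τ : R → Act)
    (x : V → Act) (i : R) :
    τ i * field W h x i = τ i * h i + (∑ j ∈ alignedSet τ x, twist W τ i j -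
      ∑ j ∈ (alignedSet τ x)ᶜ, twist W τ i j) + τ i * ∑ j ∈ S, W i j * x j := by
  have hR : (τ i : ℝ) * ∑ j ∈ R, W i j * x j =
      ∑ j ∈ alignedSet τ x, twist W τ i j - ∑ j ∈ (alignedSet τ x)ᶜ, twist W τ i j := by
    rw [← sum_coe_sort R, mul_sum, ← sum_add_sum_compl (alignedSet τ x), sub_eq_add_neg,
      ← sum_neg_distrib]
    congr 1 <;> refine sum_congr rfl fun j hj => ?_
    · rw [mem_alignedSet.1 hj, twist]
      ring
    · rw [eq_actNeg_of_ne (mem_compl.1 hj ∘ mem_alignedSet.2), twist, coe_actNeg]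
      ring
  rw [field, ← hUnion, sum_union hDisj, mul_add, mul_add, hR]
  ring

lemma abs_twist_mul_field_sub_le (hUnion : R ∪ S = univ) (hDisj : Disjoint R S) {τ : R → Act}
    (hτ : ∀ i j, 0 ≤ twist W τ i j) (x : V → Act) (i : R) :
    |τ i * field W h x i - (τ i * h i + (∑ j ∈ alignedSet τ x, |twist W τ i j| -
      ∑ j ∈ (alignedSet τ x)ᶜ, |twist W τ i j|))| ≤ ∑ j ∈ S, |W i j| := by
  simp only [abs_of_nonneg (hτ _ _)]
  rw [twist_mul_field hUnion hDisj, add_sub_cancel_left]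
  exact abs_act_mul_sum_le _ _ _

lemma pos_mul_field_of_consensus (hUnion : R ∪ S = univ) (hDisj : Disjoint R S) {σ : R → Act}
    (hσ : ∀ i j, 0 ≤ twist W σ i j) (hdeg : ∀ i ∈ R, ∑ j ∈ S, |W i j| < ∑ j ∈ R, |W i j| - |h i|)
    {x : V → Act} (hx : ∀ i : R, x i = σ i) (i : R) : 0 < σ i * field W h x i := by
  have hbound := abs_le.1 (abs_twist_mul_field_sub_le (h := h) hUnion hDisj hσ x i)
  have hall : alignedSet σ x = univ := eq_univ_of_forall fun j => mem_alignedSet.2 (hx j)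
  have hR : ∑ j, |twist W σ i j| = ∑ j ∈ R, |W i j| := by
    simp only [abs_twist, sum_coe_sort R fun j => |W i j|]
  have hh : -|h i| ≤ σ i * h i := by
    simpa [abs_mul, abs_act] using neg_abs_le ((σ i : ℝ) * h i)
  rw [hall, compl_univ, sum_empty, hR] at hbound
  linarith [hdeg i i.2]

variable (hdiag : ∀ i, W i i = 0) (hUnion : R ∪ S = univ) (hDisj : Disjoint R S) {τ : R → Act}
  (hτ : ∀ i j, 0 ≤ twist W τ i j) {hm hp : R → ℝ}
  (hhm : ∀ i, hm i ≤ τ i * h i - ∑ j ∈ S, |W i j|) (hhp : ∀ i, τ i * h i + ∑ j ∈ S, |W i j| ≤ hp i)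
include hdiag hUnion hDisj hτ hhm hhp

lemma exists_brStep_of_robustStep {x : V → Act} {Q : Finset R}
    (hstep : RobustStep (twist W τ) hm hp (alignedSet τ x) Q) :
    ∃ y, BRStep W h x y ∧ alignedSet τ y = Q := by
  rcases hstep with ⟨i, ⟨hiQ, hi⟩, rfl⟩ | ⟨i, ⟨hiQ, hi⟩, rfl⟩
  · refine ⟨update x i (τ i), brStep_update hdiag (fun h => hiQ (mem_alignedSet.2 h.symm)) ?_,
      alignedSet_update_self τ x i⟩
    have := abs_le.1 (abs_twist_mul_field_sub_le (h := h) hUnion hDisj hτ x i)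
    linarith [hhm i]
  · refine ⟨update x i (actNeg (τ i)), brStep_update hdiag ?_ ?_, alignedSet_update_actNeg τ x i⟩
    · rw [mem_alignedSet.1 hiQ]
      exact actNeg_ne _
    · have := abs_le.1 (abs_twist_mul_field_sub_le (h := h) hUnion hDisj hτ x i)
      rw [coe_actNeg]
      linarith [hhp i]

lemma exists_brPath_of_robustStep_path {x : V → Act} {Q : Finset R}
    (hpath : Relation.ReflTransGen (RobustStep (twist W τ) hm hp) (alignedSet τ x) Q) :
    ∃ y, Relation.ReflTransGen (BRStep W h) x y ∧ alignedSet τ y = Q := by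
  induction hpath with
  | refl => exact ⟨x, .refl, rfl⟩
  | tail _ hstep ih =>
    obtain ⟨y, hxy, rfl⟩ := ih
    obtain ⟨z, hyz, rfl⟩ := exists_brStep_of_robustStep hdiag hUnion hDisj hτ hhm hhp hstep
    exact ⟨z, hxy.tail hyz, rfl⟩

theorem exists_brPath_consensus (hind : Indecomposable (twist W τ) hm hp) (x : V → Act) :
    ∃ y, Relation.ReflTransGen (BRStep W h) x y ∧
      ((∀ i : R, y i = τ i) ∨ ∀ i : R, y i = actNeg (τ i)) := by
  have hmp : hm ≤ hp := fun i => by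
    linarith [hhm i, hhp i, sum_nonneg fun j (_ : j ∈ S) => abs_nonneg (W i j)]
  obtain ⟨Q, hpath, hQ⟩ := exists_robustStep_path_consensus hind hmp (alignedSet τ x)
  obtain ⟨y, hxy, rfl⟩ := exists_brPath_of_robustStep_path hdiag hUnion hDisj hτ hhm hhp hpath
  refine ⟨y, hxy, hQ.imp (fun hQ i => ?_) fun hQ i => ?_⟩
  · exact mem_alignedSet.1 (hQ ▸ mem_univ i)
  · exact eq_actNeg_of_ne fun h => notMem_empty i (hQ ▸ mem_alignedSet.2 h)

end Aligned

section Restricted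

variable {V : Type*} [DecidableEq V] {W : V → V → ℝ} {h : V → ℝ} {R S : Finset V}

/-- The external field `h^(σ)` of the `S`-restricted game with the players of `R` frozen to `σ`. -/
def restrictedField (W : V → V → ℝ) (h : V → ℝ) (σ : R → Act) (i : S) : ℝ :=
  h i + ∑ j : R, W i j * σ j

def patch (S : Finset V) (y : V → Act) (u : S → Act) (v : V) : Act :=
  if hv : v ∈ S then u ⟨v, hv⟩ else y v

@[simp]
lemma patch_coe (y : V → Act) (u : S → Act) (i : S) : patch S y u i = u i := by
  simp [patch]

lemma patch_of_notMem (y : V → Act) (u : S → Act) {v : V} (hv : v ∉ S) : patch S y u v = y v := by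
  simp [patch, hv]

lemma patch_restrict (y : V → Act) : patch S y (fun i => y i) = y := by
  funext v
  by_cases hv : v ∈ S <;> simp [patch, hv]

lemma patch_coe_of_disjoint (hDisj : Disjoint R S) {σ : R → Act} {y : V → Act}
    (hy : ∀ j : R, y j = σ j) (u : S → Act) (j : R) : patch S y u j = σ j :=
  (patch_of_notMem y u (disjoint_left.1 hDisj j.2)).trans (hy j)

variable [Fintype V]

lemma field_patch (hUnion : R ∪ S = univ) (hDisj : Disjoint R S) {σ : R → Act} {y : V → Act}
    (hy : ∀ j : R, y j = σ j) (u : S → Act) (i : S) :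
    field W h (patch S y u) i = field (fun i j : S => W i j) (restrictedField W h σ) u i := by
  have hR := patch_coe_of_disjoint hDisj hy u
  rw [field, field, restrictedField, ← hUnion, sum_union hDisj, ← sum_coe_sort R, ← sum_coe_sort S,
    add_assoc]
  simp only [hR, patch_coe]

variable (hdiag : ∀ i, W i i = 0) (hUnion : R ∪ S = univ) (hDisj : Disjoint R S)
  {σ : R → Act} {y : V → Act} (hy : ∀ j : R, y j = σ j)
include hdiag hUnion hDisj hy

lemma brStep_patch {u u' : S → Act}
    (hstep : BRStep (fun i j : S => W i j) (restrictedField W h σ) u u') :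
    BRStep W h (patch S y u) (patch S y u') := by
  obtain ⟨i, hoff, hne, hbr⟩ := hstep
  refine ⟨i, fun v hv => ?_, by simpa using hne, ?_⟩
  · by_cases hvS : v ∈ S
    · simpa [patch, hvS] using hoff ⟨v, hvS⟩ (fun h => hv (congrArg Subtype.val h))
    · simp [patch, hvS]
  · rw [patch_coe, mem_bestResponse_iff hdiag, field_patch hUnion hDisj hy]
    exact (mem_bestResponse_iff (W := fun i j : S => W i j) fun j => hdiag j).1 hbr

lemma isNash_patch (hσ : ∀ i j, 0 ≤ twist W σ i j)
    (hdeg : ∀ i ∈ R, ∑ j ∈ S, |W i j| < ∑ j ∈ R, |W i j| - |h i|) {u : S → Act}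
    (hu : IsNash (fun i j : S => W i j) (restrictedField W h σ) u) :
    IsNash W h (patch S y u) := by
  intro v
  rw [mem_bestResponse_iff hdiag]
  by_cases hvS : v ∈ S
  · lift v to S using hvS
    rw [patch_coe, field_patch hUnion hDisj hy]
    exact (mem_bestResponse_iff (W := fun i j : S => W i j) fun j => hdiag j).1 (hu v)
  · lift v to R using (mem_union.1 (hUnion ▸ mem_univ v)).resolve_right hvS
    have hR := patch_coe_of_disjoint hDisj hy u
    rw [hR]
    exact (pos_mul_field_of_consensus hUnion hDisj hσ hdeg hR v).le

theorem exists_isNash_brPath_of_consensus (hσ : ∀ i j, 0 ≤ twist W σ i j)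
    (hdeg : ∀ i ∈ R, ∑ j ∈ S, |W i j| < ∑ j ∈ R, |W i j| - |h i|)
    (hreach : GloballyBRReachable (fun i j : S => W i j) (restrictedField W h σ)
      {u | IsNash (fun i j : S => W i j) (restrictedField W h σ) u}) :
    ∃ z, IsNash W h z ∧ (∀ i : R, z i = σ i) ∧ Relation.ReflTransGen (BRStep W h) y z := by
  obtain ⟨u, hu, hpath⟩ := hreach fun i => y i
  refine ⟨patch S y u, isNash_patch hdiag hUnion hDisj hy hσ hdeg hu,
    patch_coe_of_disjoint hDisj hy u, ?_⟩
  have hlift : Relation.ReflTransGen (BRStep W h) (patch S y fun i => y i) (patch S y u) :=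
    hpath.lift (patch S y) fun _ _ => brStep_patch hdiag hUnion hDisj hy
  rwa [patch_restrict] at hlift

end Restricted

end SNC

open SNC in
theorem stmt15_general {V : Type*} [Fintype V] [DecidableEq V]
    (W : V → V → ℝ) (h : V → ℝ) (hdiag : ∀ i, W i i = 0)
    (R S : Finset V) (hUnion : R ∪ S = Finset.univ) (hDisj : Disjoint R S)
    (τ : {i // i ∈ R} → Act)
    (hτ : ∀ i j : {i // i ∈ R}, 0 ≤ (τ i : ℝ) * W i.1 j.1 * (τ j : ℝ))
    (hind : Indecomposable (fun i j : {i // i ∈ R} => (τ i : ℝ) * W i.1 j.1 * (τ j : ℝ))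
      (fun i : {i // i ∈ R} => (τ i : ℝ) * h i.1 - ∑ j ∈ S, |W i.1 j|)
      (fun i : {i // i ∈ R} => (τ i : ℝ) * h i.1 + ∑ j ∈ S, |W i.1 j|))
    (hdeg : ∀ i ∈ R, ∑ j ∈ S, |W i j| < (∑ j ∈ R, |W i j|) - |h i|)
    (hreach : ∀ y : {i // i ∈ R} → Act,
      (y = τ ∨ y = fun j => actNeg (τ j)) →
      GloballyBRReachable (fun i j : {i // i ∈ S} => W i.1 j.1)
        (fun i : {i // i ∈ S} => h i.1 + ∑ j : {i // i ∈ R}, W i.1 j.1 * (y j : ℝ))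
        {z : {i // i ∈ S} → Act | IsNash (fun i j : {i // i ∈ S} => W i.1 j.1)
          (fun i : {i // i ∈ S} => h i.1 + ∑ j : {i // i ∈ R}, W i.1 j.1 * (y j : ℝ)) z}) :
    ({x : V → Act | IsNash W h x ∧
        ((∀ i : {i // i ∈ R}, x i.1 = τ i) ∨ (∀ i : {i // i ∈ R}, x i.1 = actNeg (τ i)))}).Nonempty ∧
    GloballyBRReachable W h
      {x : V → Act | IsNash W h x ∧
        ((∀ i : {i // i ∈ R}, x i.1 = τ i) ∨ (∀ i : {i // i ∈ R}, x i.1 = actNeg (τ i)))} := by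
  refine ⟨GloballyBRReachable.nonempty ?reachable, ?reachable⟩
  intro x
  obtain ⟨y, hxy, hy | hy⟩ :=
    exists_brPath_consensus hdiag hUnion hDisj hτ (fun _ => le_rfl) (fun _ => le_rfl) hind x
  · obtain ⟨z, hz, hzR, hyz⟩ := exists_isNash_brPath_of_consensus hdiag hUnion hDisj hy hτ hdeg
      (hreach τ (Or.inl rfl))
    exact ⟨z, ⟨hz, Or.inl hzR⟩, hxy.trans hyz⟩
  · obtain ⟨z, hz, hzR, hyz⟩ := exists_isNash_brPath_of_consensus hdiag hUnion hDisj hy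
      ((twist_actNeg W τ).symm ▸ hτ) hdeg (hreach _ (Or.inr rfl))
    exact ⟨z, ⟨hz, Or.inr hzR⟩, hxy.trans hyz⟩

theorem stmt15 {V : Type*} [Fintype V] [DecidableEq V] [Nonempty V]
    (W : V → V → ℝ) (h : V → ℝ) (hdiag : ∀ i, W i i = 0)
    (R S : Finset V) (hUnion : R ∪ S = Finset.univ) (hDisj : Disjoint R S)
    (τ : {i // i ∈ R} → Act)
    (hτ : ∀ i j : {i // i ∈ R}, 0 ≤ (τ i : ℝ) * W i.1 j.1 * (τ j : ℝ))
    (hind : Indecomposable (fun i j : {i // i ∈ R} => (τ i : ℝ) * W i.1 j.1 * (τ j : ℝ))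
      (fun i : {i // i ∈ R} => (τ i : ℝ) * h i.1 - ∑ j ∈ S, |W i.1 j|)
      (fun i : {i // i ∈ R} => (τ i : ℝ) * h i.1 + ∑ j ∈ S, |W i.1 j|))
    (hdeg : ∀ i ∈ R, ∑ j ∈ S, |W i j| < (∑ j ∈ R, |W i j|) - |h i|)
    (hreach : ∀ y : {i // i ∈ R} → Act,
      (y = τ ∨ y = fun j => actNeg (τ j)) →
      GloballyBRReachable (fun i j : {i // i ∈ S} => W i.1 j.1)
        (fun i : {i // i ∈ S} => h i.1 + ∑ j : {i // i ∈ R}, W i.1 j.1 * (y j : ℝ))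
        {z : {i // i ∈ S} → Act | IsNash (fun i j : {i // i ∈ S} => W i.1 j.1)
          (fun i : {i // i ∈ S} => h i.1 + ∑ j : {i // i ∈ R}, W i.1 j.1 * (y j : ℝ)) z}) :
    ({x : V → Act | IsNash W h x ∧
        ((∀ i : {i // i ∈ R}, x i.1 = τ i) ∨ (∀ i : {i // i ∈ R}, x i.1 = actNeg (τ i)))}).Nonempty ∧
    GloballyBRReachable W h
      {x : V → Act | IsNash W h x ∧
        ((∀ i : {i // i ∈ R}, x i.1 = τ i) ∨ (∀ i : {i // i ∈ R}, x i.1 = actNeg (τ i)))} :=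
  stmt15_general W h hdiag R S hUnion hDisj τ hτ hind hdeg hreach
end
end
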